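/- arXiv:1209.5104 — 2 statements merged into one kernel-verified Lean document; each statement's English description precedes it below -/
import Mathlib

section
/- Let K be a field, f = ∑_μ a_μ x^μ ∈ K[x_1,…,x_n] nonzero, let σ = ⟨u^{(1)},…,u^{(k)}⟩ be a polyhedral cone with generators u^{(i)} ∈ (ℝ_{≥0})^n, and let P ∈ supp(f). If for every ω in the relative interior of σ the ω-initial part In_ω f is the single term a_P x^P, then supp(f) ⊆ P + σ^∨. -/
/-!
A weight `ω` in the relative interior of `σ` whose initial part is the single term `a_P x^P`
makes `P` a minimum of `ν ↦ ω · ν` on `supp f`, i.e. `ω · (μ - P) ≥ 0` for all `μ ∈ supp f`.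
Every point of `σ` is a limit of such weights (add `ε ∑ u⁽ʲ⁾` and let `ε → 0⁺`), and
`ω ↦ ω · (μ - P)` is continuous, so the inequality persists on all of `σ`.
-/

open MvPolynomial Matrix

/-- The cone generated by vectors `u 0, …, u (k-1)` in `ℝ^n`. -/
def coneGen {n k : ℕ} (u : Fin k → (Fin n → ℝ)) : Set (Fin n → ℝ) :=
  {x | ∃ lam : Fin k → ℝ, (∀ j, 0 ≤ lam j) ∧ x = ∑ j, lam j • u j}

/-- The dual cone of a subset of `ℝ^n`: vectors pairing nonnegatively with all of `s`. -/
def dualCone {n : ℕ} (s : Set (Fin n → ℝ)) : Set (Fin n → ℝ) :=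
  {v | ∀ u ∈ s, 0 ≤ ∑ i, v i * u i}

/-- The cone generated by the columns of a real `n × n` matrix. -/
def coneOfCols {n : ℕ} (A : Matrix (Fin n) (Fin n) ℝ) : Set (Fin n → ℝ) :=
  {x | ∃ lam : Fin n → ℝ, (∀ i, 0 ≤ lam i) ∧ x = A.mulVec lam}
open MvPolynomial Matrix

open Classical in
/-- The `w`-initial part of a multivariate polynomial: the sum of the terms whose
exponents have minimal `w`-weight among the exponents of `f`. -/
noncomputable def initialPart {n : ℕ} {K : Type*} [CommSemiring K] (w : Fin n → ℝ)
    (f : MvPolynomial (Fin n) K) : MvPolynomial (Fin n) K :=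
  ∑ μ ∈ f.support,
    if ∀ ν ∈ f.support, ∑ i, w i * (μ i : ℝ) ≤ ∑ i, w i * (ν i : ℝ)
    then monomial μ (f.coeff μ) else 0

open Filter Topology

open Classical in
theorem coeff_initialPart {n : ℕ} {K : Type*} [CommSemiring K] (w : Fin n → ℝ)
    (f : MvPolynomial (Fin n) K) (μ : Fin n →₀ ℕ) :
    (initialPart w f).coeff μ =
      if ∀ ν ∈ f.support, ∑ i, w i * (μ i : ℝ) ≤ ∑ i, w i * (ν i : ℝ) then f.coeff μ else 0 := by
  rw [initialPart, coeff_sum]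
  simp_rw [apply_ite (coeff μ), coeff_monomial, coeff_zero]
  by_cases hμ : μ ∈ f.support
  · rw [Finset.sum_eq_single_of_mem μ hμ fun ν _ hνμ => by simp [hνμ]]
    simp
  · rw [Finset.sum_eq_zero fun ν hν => by simp [ne_of_mem_of_not_mem hν hμ]]
    simp [notMem_support_iff.mp hμ]

theorem weight_le_of_initialPart_eq_monomial {n : ℕ} {K : Type*} [CommSemiring K]
    {w : Fin n → ℝ} {f : MvPolynomial (Fin n) K} {P : Fin n →₀ ℕ} (hP : P ∈ f.support)
    (h : initialPart w f = monomial P (f.coeff P)) :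
    ∀ ν ∈ f.support, ∑ i, w i * (P i : ℝ) ≤ ∑ i, w i * (ν i : ℝ) := by
  by_contra hmin
  have hcoeff := congrArg (coeff P) h
  rw [coeff_initialPart, coeff_monomial, if_pos rfl, if_neg hmin] at hcoeff
  exact mem_support_iff.mp hP hcoeff.symm

theorem support_subset_vertex_add_dualCone_general {n k : ℕ} {K : Type*} [Field K]
    (f : MvPolynomial (Fin n) K)
    (u : Fin k → (Fin n → ℝ))
    (P : Fin n →₀ ℕ) (hP : P ∈ f.support)
    (hinit : ∀ lam : Fin k → ℝ, (∀ j, 0 < lam j) →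
      initialPart (∑ j, lam j • u j) f = monomial P (f.coeff P)) :
    ∀ μ ∈ f.support, (fun i => (μ i : ℝ) - (P i : ℝ)) ∈ dualCone (coneGen u) := by
  rintro μ hμ v ⟨lam, hlam, rfl⟩
  set d : Fin n → ℝ := fun i => (μ i : ℝ) - (P i : ℝ)
  have hinterior : ∀ ε > 0, 0 ≤ ∑ i, d i * (∑ j, (lam j + ε) • u j) i := fun ε hε => by
    have hmin := weight_le_of_initialPart_eq_monomial hP
      (hinit (fun j => lam j + ε) fun j => by linarith [hlam j]) μ hμ
    simp only [d, sub_mul, Finset.sum_sub_distrib, sub_nonneg]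
    simpa only [mul_comm] using hmin
  have hlim : Tendsto (fun ε : ℝ => ∑ i, d i * (∑ j, (lam j + ε) • u j) i) (𝓝[>] 0)
      (𝓝 (∑ i, d i * (∑ j, lam j • u j) i)) := by
    have hcont : Continuous fun ε : ℝ => ∑ i, d i * (∑ j, (lam j + ε) • u j) i := by fun_prop
    simpa using (hcont.continuousWithinAt (s := Set.Ioi 0) (x := 0)).tendsto
  exact ge_of_tendsto hlim (eventually_nhdsWithin_of_forall hinterior)

/-- Let `f` be nonzero, let `σ` be the cone generated by vectors
`u 1, …, u k` lying in the first orthant, and let `P ∈ supp f`.  If for every `ω` in the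
relative interior of `σ` the initial part `In_ω f` is the single term `a_P x^P`, then
`supp f ⊆ P + σ^∨`. -/
theorem support_subset_vertex_add_dualCone {n k : ℕ} {K : Type*} [Field K]
    (f : MvPolynomial (Fin n) K) (hf : f ≠ 0)
    (u : Fin k → (Fin n → ℝ)) (hu : ∀ j i, 0 ≤ u j i)
    (P : Fin n →₀ ℕ) (hP : P ∈ f.support)
    (hinit : ∀ lam : Fin k → ℝ, (∀ j, 0 < lam j) →
      initialPart (∑ j, lam j • u j) f = monomial P (f.coeff P)) :
    ∀ μ ∈ f.support, (fun i => (μ i : ℝ) - (P i : ℝ)) ∈ dualCone (coneGen u) :=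
  support_subset_vertex_add_dualCone_general f u P hP hinit
end

section
/- Let K be a field, f ∈ K[x_1,…,x_n] nonzero, and M an n×n unimodular matrix with nonnegative integer entries. Assume the cone generated by the columns of M^t is good for f, i.e. the initial part In_u f is the same polynomial for all u = M^t λ with λ ∈ (ℝ_{>0})^n. Then the Newton polyhedron of f∘φ_M has only one vertex; explicitly, there exist P ∈ ℕ^n and h ∈ K[x_1,…,x_n] with h(0) ≠ 0 such that f∘φ_M = x^P·h. -/
/-!
Write `f = ∑ c_μ x^μ`, so that `f ∘ φ_M = ∑ c_μ x^(Mμ)`, and note that the `Mᵀλ`-weight of `μ`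
is the `λ`-weight of `Mμ`. Take `μ₀` in the support of `In_(Mᵀ𝟙) f`; since the cone is good,
`μ₀` has minimal `Mᵀλ`-weight for every `λ > 0`, and letting `λ` tend to a coordinate vector
gives `Mμ₀ ≤ Mν` componentwise for every exponent `ν` of `f`. Hence `f ∘ φ_M = x^(Mμ₀) · h`,
and as `μ ↦ Mμ` is injective (`det M = ±1`) the constant term of `h` is `c_μ₀ ≠ 0`.
-/

open MvPolynomial Matrix

/-- The monomial substitution `φ_M` on polynomials: `x_i ↦ ∏_j x_j ^ (M j i)`,
so that `x^μ ↦ x^(Mμ)`. -/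
noncomputable def monomialSubst {n : ℕ} {K : Type*} [CommSemiring K]
    (M : Matrix (Fin n) (Fin n) ℕ) (f : MvPolynomial (Fin n) K) : MvPolynomial (Fin n) K :=
  aeval (fun i => ∏ j, (X j : MvPolynomial (Fin n) K) ^ M j i) f

/-- A nonnegative integer square matrix is unimodular if its determinant (over `ℤ`) is `±1`. -/
def IsUnimodular {n : ℕ} (M : Matrix (Fin n) (Fin n) ℕ) : Prop :=
  (M.map fun a => (a : ℤ)).det = 1 ∨ (M.map fun a => (a : ℤ)).det = -1

open Filter Topology

section ExponentMatrix

variable {σ : Type*} [Fintype σ]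

noncomputable def mulVecFinsupp (M : Matrix σ σ ℕ) (μ : σ →₀ ℕ) : σ →₀ ℕ :=
  Finsupp.equivFunOnFinite.symm (M *ᵥ ⇑μ)

lemma natCast_comp_mulVec {R : Type*} [NonAssocSemiring R] (M : Matrix σ σ ℕ) (v : σ → ℕ) :
    ((↑) : ℕ → R) ∘ (M *ᵥ v) = M.map (↑) *ᵥ ((↑) ∘ v) :=
  funext (RingHom.map_mulVec (Nat.castRingHom R) M v)

lemma mulVecFinsupp_injective [DecidableEq σ] {M : Matrix σ σ ℕ}
    (hM : IsUnit (M.map ((↑) : ℕ → ℤ)).det) : Function.Injective (mulVecFinsupp M) := by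
  intro μ ν hμν
  have hℕ : M *ᵥ ⇑μ = M *ᵥ ⇑ν := funext (DFunLike.congr_fun hμν)
  have hℤ : M.map ((↑) : ℕ → ℤ) *ᵥ ((↑) ∘ ⇑μ) = M.map (↑) *ᵥ ((↑) ∘ ⇑ν) := by
    rw [← natCast_comp_mulVec, ← natCast_comp_mulVec, hℕ]
  exact DFunLike.coe_injective <| Nat.cast_injective.comp_left <|
    mulVec_injective_of_isUnit ((isUnit_iff_isUnit_det _).2 hM) hℤ

lemma transpose_mulVec_dotProduct_natCast (M : Matrix σ σ ℕ) (lam : σ → ℝ) (μ : σ → ℕ) :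
    ((M.map ((↑) : ℕ → ℝ))ᵀ *ᵥ lam) ⬝ᵥ (fun i => (μ i : ℝ)) =
      lam ⬝ᵥ fun j => ((M *ᵥ μ) j : ℝ) := by
  rw [mulVec_transpose, ← dotProduct_mulVec]
  exact congrArg _ (natCast_comp_mulVec M μ).symm

end ExponentMatrix

lemma le_of_forall_pos_dotProduct_le {σ : Type*} [Fintype σ] {a b : σ → ℝ}
    (h : ∀ w : σ → ℝ, (∀ i, 0 < w i) → w ⬝ᵥ a ≤ w ⬝ᵥ b) : a ≤ b := by
  classical
  intro j
  -- test against the weights `Pi.single j 1 + ε` and let `ε → 0⁺`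
  have hpos : ∀ ε > 0, a j + ε * ∑ i, a i ≤ b j + ε * ∑ i, b i := fun ε hε => by
    have hsingle : 0 ≤ (Pi.single j 1 : σ → ℝ) := Pi.single_nonneg.2 zero_le_one
    have hw := h (Pi.single j 1 + fun _ => ε) fun i => add_pos_of_nonneg_of_pos (hsingle i) hε
    rw [add_dotProduct, add_dotProduct, single_dotProduct, single_dotProduct] at hw
    simpa only [one_mul, dotProduct, Finset.mul_sum] using hw
  have hlim : Tendsto (fun ε : ℝ => (a j + ε * ∑ i, a i) - (b j + ε * ∑ i, b i))
      (𝓝[>] 0) (𝓝 (a j - b j)) := by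
    have hcont : Continuous fun ε : ℝ => (a j + ε * ∑ i, a i) - (b j + ε * ∑ i, b i) := by
      fun_prop
    simpa using (hcont.tendsto 0).mono_left nhdsWithin_le_nhds
  exact sub_nonpos.1 <| le_of_tendsto hlim <|
    eventually_nhdsWithin_of_forall fun ε hε => sub_nonpos.2 (hpos ε hε)

lemma constantCoeff_sum_monomial_tsub {σ ι R : Type*} [CommSemiring R]
    {s : Finset ι} {e : ι → σ →₀ ℕ} (he : Set.InjOn e s) (c : ι → R) {i₀ : ι} (hi₀ : i₀ ∈ s)
    (hle : ∀ i ∈ s, e i₀ ≤ e i) :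
    constantCoeff (∑ i ∈ s, monomial (e i - e i₀) (c i)) = c i₀ := by
  classical
  have hzero : ∀ i ∈ s, e i - e i₀ = 0 ↔ i = i₀ := fun i hi => by
    rw [tsub_eq_zero_iff_le]
    exact ⟨fun h => he hi hi₀ (le_antisymm h (hle i hi)), fun h => h ▸ le_rfl⟩
  rw [map_sum, Finset.sum_congr rfl fun i hi => by
    rw [constantCoeff_monomial, if_congr (hzero i hi) rfl rfl], Finset.sum_ite_eq' s i₀, if_pos hi₀]

section Polynomial

variable {n : ℕ} {K : Type*} [CommSemiring K]

open Classical in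
lemma mem_support_initialPart {w : Fin n → ℝ} {f : MvPolynomial (Fin n) K} {μ : Fin n →₀ ℕ} :
    μ ∈ (initialPart w f).support ↔
      μ ∈ f.support ∧ ∀ ν ∈ f.support, w ⬝ᵥ (fun i => (μ i : ℝ)) ≤ w ⬝ᵥ fun i => (ν i : ℝ) := by
  have hcoeff : (initialPart w f).coeff μ = if ∀ ν ∈ f.support,
      w ⬝ᵥ (fun i => (μ i : ℝ)) ≤ w ⬝ᵥ fun i => (ν i : ℝ) then f.coeff μ else 0 := by
    rw [initialPart, coeff_sum, Finset.sum_eq_single μ]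
    · rw [apply_ite (coeff μ), coeff_monomial, if_pos rfl, coeff_zero]
      rfl
    · intro ν _ hne
      split_ifs <;> simp [coeff_monomial, hne]
    · intro hμ
      simp [notMem_support_iff.1 hμ]
  rw [mem_support_iff, mem_support_iff, hcoeff]
  by_cases hmin : ∀ ν ∈ f.support, w ⬝ᵥ (fun i => (μ i : ℝ)) ≤ w ⬝ᵥ fun i => (ν i : ℝ)
  · rw [if_pos hmin]
    exact ⟨fun hμ => ⟨hμ, hmin⟩, And.left⟩
  · rw [if_neg hmin]
    exact ⟨fun h => absurd rfl h, fun hμ => absurd hμ.2 hmin⟩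

lemma monomialSubst_monomial (M : Matrix (Fin n) (Fin n) ℕ) (μ : Fin n →₀ ℕ) (c : K) :
    monomialSubst M (monomial μ c) = monomial (mulVecFinsupp M μ) c := by
  rw [monomialSubst, aeval_monomial, Finsupp.prod_fintype _ _ fun i => pow_zero _,
    monomial_eq, Finsupp.prod_fintype _ _ fun i => pow_zero _, MvPolynomial.algebraMap_eq]
  congr 1
  simp_rw [← Finset.prod_pow, ← pow_mul]
  rw [Finset.prod_comm]
  simp_rw [Finset.prod_pow_eq_pow_sum]
  rfl

lemma monomialSubst_eq_monomial_mul_sum (M : Matrix (Fin n) (Fin n) ℕ)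
    (f : MvPolynomial (Fin n) K) {P : Fin n →₀ ℕ} (hP : ∀ ν ∈ f.support, P ≤ mulVecFinsupp M ν) :
    monomialSubst M f =
      monomial P 1 * ∑ ν ∈ f.support, monomial (mulVecFinsupp M ν - P) (f.coeff ν) := by
  conv_lhs => rw [← support_sum_monomial_coeff f]
  rw [monomialSubst, map_sum, Finset.mul_sum]
  refine Finset.sum_congr rfl fun ν hν => ?_
  rw [← monomialSubst, monomialSubst_monomial, monomial_mul, one_mul,
    add_tsub_cancel_of_le (hP ν hν)]

end Polynomial

lemma IsUnimodular.isUnit_det {n : ℕ} {M : Matrix (Fin n) (Fin n) ℕ} (hM : IsUnimodular M) :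
    IsUnit (M.map ((↑) : ℕ → ℤ)).det :=
  Int.isUnit_iff.2 hM

/-- If `M` is a nonnegative unimodular matrix such that the cone generated by
the columns of `Mᵀ` is good for the nonzero polynomial `f` (the initial part `In_u f` is
the same for all `u = Mᵀλ` with `λ` strictly positive), then the Newton polyhedron of
`f ∘ φ_M` has only one vertex: `f ∘ φ_M = x^P · h` with `h(0) ≠ 0`. -/
theorem monomialSubst_eq_monomial_mul_unit {n : ℕ} {K : Type*} [Field K]
    (f : MvPolynomial (Fin n) K) (hf : f ≠ 0)
    (M : Matrix (Fin n) (Fin n) ℕ) (hM : IsUnimodular M)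
    (hgood : ∀ lam lam' : Fin n → ℝ, (∀ i, 0 < lam i) → (∀ i, 0 < lam' i) →
      initialPart (((M.map ((↑) : ℕ → ℝ))ᵀ).mulVec lam) f =
        initialPart (((M.map ((↑) : ℕ → ℝ))ᵀ).mulVec lam') f) :
    ∃ (P : Fin n →₀ ℕ) (h : MvPolynomial (Fin n) K),
      monomialSubst M f = monomial P 1 * h ∧ eval (0 : Fin n → K) h ≠ 0 := by
  obtain ⟨μ₀, hμ₀, hmin⟩ := f.support.exists_min_image
    (fun μ => ((M.map ((↑) : ℕ → ℝ))ᵀ *ᵥ 1) ⬝ᵥ fun i => (μ i : ℝ)) (support_nonempty.2 hf)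
  have hinitial : ∀ lam : Fin n → ℝ, (∀ i, 0 < lam i) →
      μ₀ ∈ (initialPart ((M.map ((↑) : ℕ → ℝ))ᵀ *ᵥ lam) f).support := fun lam hlam => by
    rw [hgood lam 1 hlam fun _ => one_pos]
    exact mem_support_initialPart.2 ⟨hμ₀, hmin⟩
  have hle : ∀ ν ∈ f.support, mulVecFinsupp M μ₀ ≤ mulVecFinsupp M ν := fun ν hν j => by
    have hweights := le_of_forall_pos_dotProduct_le fun lam hlam => by
      simpa only [transpose_mulVec_dotProduct_natCast] using
        (mem_support_initialPart.1 (hinitial lam hlam)).2 ν hν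
    exact Nat.cast_le.1 (hweights j)
  refine ⟨_, _, monomialSubst_eq_monomial_mul_sum M f hle, ?_⟩
  rw [eval_zero, constantCoeff_sum_monomial_tsub (mulVecFinsupp_injective hM.isUnit_det).injOn _
    hμ₀ hle]
  exact mem_support_iff.1 hμ₀
end
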